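/- arXiv:1712.08389 — 3 statements merged into one kernel-verified Lean document; each statement's English description precedes it below -/
import Mathlib

section
/- Fix a matroid (J,F) of rank k on J = {1,...,n} and m ≥ 1. Let T be an N-system with N ≥ mk+1 that admits good decompositions. Then any two good decompositions of T are equivalent, i.e., connected by a finite chain of locally related good decompositions. -/
/-- A matroid in the sense of the paper. -/
structure PaperMatroid (α : Type*) [DecidableEq α] [Fintype α] where
  Indep : Finset α → Prop
  nonempty : ∃ I, Indep I
  subset_closed : ∀ ⦃I J : Finset α⦄, Indep I → J ⊆ I → Indep J
  max_card_eq : ∀ (A I₁ I₂ : Finset α),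
    I₁ ⊆ A → Indep I₁ → (∀ J, J ⊆ A → Indep J → I₁ ⊆ J → J = I₁) →
    I₂ ⊆ A → Indep I₂ → (∀ J, J ⊆ A → Indep J → I₂ ⊆ J → J = I₂) →
    I₁.card = I₂.card

/-- `I` is a maximal independent subset of `A`. -/
def PaperMatroid.MaxIndepIn {α : Type*} [DecidableEq α] [Fintype α]
    (M : PaperMatroid α) (A I : Finset α) : Prop :=
  I ⊆ A ∧ M.Indep I ∧ ∀ J, J ⊆ A → M.Indep J → I ⊆ J → J = I

/-- The support of a system `T : Fin n → ℕ`. -/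
def suppSys {n : ℕ} (T : Fin n → ℕ) : Finset (Fin n) :=
  Finset.univ.filter (fun j => T j ≠ 0)

/-- The indicator system `[j]`. -/
def indSys {n : ℕ} (j : Fin n) : Fin n → ℕ := fun i => if i = j then 1 else 0

/-- A base of the rank-`k` matroid `(J,F)`: a `k`-system with values in `{0,1}`
whose support is independent. -/
def IsBaseSys {n : ℕ} (M : PaperMatroid (Fin n)) (k : ℕ) (T : Fin n → ℕ) : Prop :=
  M.Indep (suppSys T) ∧ (∀ j, T j ≤ 1) ∧ ∑ j, T j = k

/-- `T` decomposes as a sum of `m` bases and the system `last`. -/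
def StrongDecompWith {n : ℕ} (M : PaperMatroid (Fin n)) (k m : ℕ)
    (T last : Fin n → ℕ) : Prop :=
  ∃ B : Fin m → (Fin n → ℕ), (∀ i, IsBaseSys M k (B i)) ∧ T = (∑ i, B i) + last

/-- `T` is a strong `(mk+l)`-system: it is an `(mk+l)`-system admitting a strong
decomposition into `m` bases and an `l`-system. -/
def IsStrongSys {n : ℕ} (M : PaperMatroid (Fin n)) (k m l : ℕ) (T : Fin n → ℕ) : Prop :=
  (∑ j, T j = m * k + l) ∧
  ∃ last : Fin n → ℕ, (∑ j, last j = l) ∧ StrongDecompWith M k m T last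
/-- `(T₁,T₂)` is a good decomposition of `T`: `T = T₁ + T₂` with `T₂` a strong
`(mk+1)`-system. -/
def GoodDecomp {n : ℕ} (M : PaperMatroid (Fin n)) (k m : ℕ)
    (T : Fin n → ℕ) (p : (Fin n → ℕ) × (Fin n → ℕ)) : Prop :=
  T = p.1 + p.2 ∧ IsStrongSys M k m 1 p.2

/-- Two good decompositions are locally related: their second members admit strong
decompositions agreeing in the first `m` (base) summands. -/
def LocallyRelated {n : ℕ} (M : PaperMatroid (Fin n)) (k m : ℕ)
    (p q : (Fin n → ℕ) × (Fin n → ℕ)) : Prop :=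
  ∃ B : Fin m → (Fin n → ℕ), (∀ i, IsBaseSys M k (B i)) ∧
    ∃ s t : Fin n → ℕ, (∑ j, s j = 1) ∧ (∑ j, t j = 1) ∧
      p.2 = (∑ i, B i) + s ∧ q.2 = (∑ i, B i) + t

open Finset
open scoped Classical

variable {α : Type*} [DecidableEq α] [Fintype α] (M : PaperMatroid α)

lemma PaperMatroid.indep_empty : M.Indep ∅ := by
  obtain ⟨I, hI⟩ := M.nonempty
  exact M.subset_closed hI (empty_subset I)

noncomputable def PaperMatroid.r (A : Finset α) : ℕ :=
  (A.powerset.filter M.Indep).sup Finset.card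

lemma PaperMatroid.card_le_r {I A : Finset α} (hIA : I ⊆ A) (hI : M.Indep I) :
    I.card ≤ M.r A :=
  Finset.le_sup (by simp [mem_filter, mem_powerset, hIA, hI])

lemma PaperMatroid.exists_attain (A : Finset α) :
    ∃ I, I ⊆ A ∧ M.Indep I ∧ I.card = M.r A := by
  have hne : (A.powerset.filter M.Indep).Nonempty :=
    ⟨∅, by simp [mem_filter, M.indep_empty]⟩
  obtain ⟨I, hI, hcard⟩ := Finset.exists_mem_eq_sup _ hne Finset.card
  simp only [mem_filter, mem_powerset] at hI
  exact ⟨I, hI.1, hI.2, hcard.symm⟩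

lemma PaperMatroid.r_mono {A B : Finset α} (h : A ⊆ B) : M.r A ≤ M.r B := by
  obtain ⟨I, hIA, hI, hc⟩ := M.exists_attain A
  rw [← hc]; exact M.card_le_r (hIA.trans h) hI

lemma PaperMatroid.r_le_card (A : Finset α) : M.r A ≤ A.card := by
  obtain ⟨I, hIA, _, hc⟩ := M.exists_attain A
  rw [← hc]; exact card_le_card hIA

lemma PaperMatroid.r_indep {I : Finset α} (hI : M.Indep I) : M.r I = I.card :=
  le_antisymm (M.r_le_card I) (M.card_le_r (Finset.Subset.refl I) hI)

lemma PaperMatroid.indep_of_r_eq_card {A : Finset α} (h : M.r A = A.card) :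
    M.Indep A := by
  obtain ⟨I, hIA, hI, hc⟩ := M.exists_attain A
  have : I = A := Finset.eq_of_subset_of_card_le hIA (by omega)
  rwa [← this]

/-- a max-card independent subset of `A` is maximal in `A` -/
lemma PaperMatroid.attain_maximal {A I : Finset α} (hIA : I ⊆ A) (hI : M.Indep I)
    (hc : I.card = M.r A) : ∀ J, J ⊆ A → M.Indep J → I ⊆ J → J = I := by
  intro J hJA hJ hIJ
  exact (Finset.eq_of_subset_of_card_le hIJ (hc ▸ M.card_le_r hJA hJ)).symm

/-- every independent subset of `A` extends to one of full rank -/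
lemma PaperMatroid.exists_extend {I A : Finset α} (hIA : I ⊆ A) (hI : M.Indep I) :
    ∃ I', I ⊆ I' ∧ I' ⊆ A ∧ M.Indep I' ∧ I'.card = M.r A := by
  -- strong induction on A.card - I.card
  obtain ⟨I₀, hI₀A, hI₀, hc₀⟩ := M.exists_attain A
  by_cases hmax : ∀ J, J ⊆ A → M.Indep J → I ⊆ J → J = I
  · refine ⟨I, Finset.Subset.refl I, hIA, hI, ?_⟩
    rw [← hc₀]
    exact M.max_card_eq A I I₀ hIA hI hmax hI₀A hI₀
      (M.attain_maximal hI₀A hI₀ hc₀)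
  · push_neg at hmax
    obtain ⟨J, hJA, hJ, hIJ, hne⟩ := hmax
    have hlt : I.card < J.card :=
      Finset.card_lt_card (Finset.ssubset_iff_subset_ne.2 ⟨hIJ, fun h => hne h.symm⟩)
    have : A.card - J.card < A.card - I.card := by
      have := Finset.card_le_card hJA; omega
    obtain ⟨I', h1, h2, h3, h4⟩ := PaperMatroid.exists_extend hJA hJ
    exact ⟨I', hIJ.trans h1, h2, h3, h4⟩
termination_by A.card - I.card

lemma PaperMatroid.r_submod (A B : Finset α) :
    M.r (A ∪ B) + M.r (A ∩ B) ≤ M.r A + M.r B := by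
  obtain ⟨I0, hI0sub, hI0, hc0⟩ := M.exists_attain (A ∩ B)
  obtain ⟨IA, hIsub, hIA_A, hIAind, hcA⟩ := M.exists_extend (hI0sub.trans (inter_subset_left)) hI0
  obtain ⟨IU, hsub2, hIU_U, hIUind, hcU⟩ := M.exists_extend (hIA_A.trans (subset_union_left)) hIAind
  -- I0 ∪ (IU \ IA) ⊆ B, independent
  have hindep : M.Indep (I0 ∪ (IU \ IA)) := by
    apply M.subset_closed hIUind
    intro x hx
    rcases mem_union.1 hx with h | h
    · exact hsub2 (hIsub h)
    · exact (mem_sdiff.1 h).1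
  have hsubB : I0 ∪ (IU \ IA) ⊆ B := by
    intro x hx
    rcases mem_union.1 hx with h | h
    · exact (mem_inter.1 (hI0sub h)).2
    · obtain ⟨hxU, hxA⟩ := mem_sdiff.1 h
      rcases mem_union.1 (hIU_U hxU) with hA | hB
      · -- x ∈ A: contradicts maximality of IA in A
        exfalso
        have hins : M.Indep (insert x IA) :=
          M.subset_closed hIUind (insert_subset hxU hsub2)
        have hmax := M.attain_maximal hIA_A hIAind hcA
        have := hmax (insert x IA) (insert_subset hA hIA_A) hins (subset_insert _ _)
        exact hxA (this ▸ mem_insert_self x IA)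
      · exact hB
  have hcard : (I0 ∪ (IU \ IA)).card = I0.card + (IU.card - IA.card) := by
    rw [card_union_of_disjoint]
    · congr 1
      exact card_sdiff_of_subset hsub2
    · refine disjoint_left.2 fun x hx hx2 => ?_
      exact (mem_sdiff.1 hx2).2 (hIsub hx)
  have hB' := M.card_le_r hsubB hindep
  rw [hcard] at hB'
  have h1 : IA.card ≤ IU.card := card_le_card hsub2
  omega

lemma PaperMatroid.r_insert_le (A : Finset α) (e : α) :
    M.r (insert e A) ≤ M.r A + 1 := by
  obtain ⟨I, hIsub, hI, hc⟩ := M.exists_attain (insert e A)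
  rw [← hc]
  have : I.erase e ⊆ A := fun x hx => by
    obtain ⟨hne, hxI⟩ := mem_erase.1 hx
    rcases mem_insert.1 (hIsub hxI) with h | h
    · exact absurd h hne
    · exact h
  have h2 := M.card_le_r this (M.subset_closed hI (erase_subset e I))
  by_cases h : e ∈ I
  · have := Finset.card_erase_add_one h; omega
  · have : I ⊆ A := fun x hx => by
      rcases mem_insert.1 (hIsub hx) with h1 | h1
      · exact absurd (h1 ▸ hx) h
      · exact h1
    have := M.card_le_r this hI; omega

/-- if both extensions don't raise rank, neither does their union -/
lemma PaperMatroid.r_union_eq_of_two {S P Q : Finset α}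
    (hP : M.r (S ∪ P) = M.r S) (hQ : M.r (S ∪ Q) = M.r S) :
    M.r (S ∪ (P ∪ Q)) = M.r S := by
  have hsub := M.r_submod (S ∪ P) (S ∪ Q)
  have h1 : (S ∪ P) ∪ (S ∪ Q) = S ∪ (P ∪ Q) := by
    rw [union_union_union_comm, union_self]
  have h2 : S ⊆ (S ∪ P) ∩ (S ∪ Q) :=
    subset_inter subset_union_left subset_union_left
  have h3 := M.r_mono h2
  have h4 : S ⊆ S ∪ (P ∪ Q) := subset_union_left
  have h5 := M.r_mono h4
  rw [h1, hP, hQ] at hsub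
  omega

/-- closure extension: if no element of W raises the rank of S, then S ∪ W has rank of S -/
lemma PaperMatroid.r_union_eq_of_forall {S W : Finset α}
    (h : ∀ w ∈ W, M.r (insert w S) = M.r S) : M.r (S ∪ W) = M.r S := by
  induction W using Finset.induction with
  | empty => simp
  | @insert w W' hw ih =>
    have h1 : M.r (S ∪ W') = M.r S := ih fun v hv => h v (mem_insert_of_mem hv)
    have h2 : M.r (S ∪ {w}) = M.r S := by
      rw [union_comm, ← insert_eq]; exact h w (mem_insert_self _ _)
    have h3 := M.r_union_eq_of_two h1 h2
    rw [← h3]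
    congr 1
    rw [union_comm W' {w}, ← insert_eq]
/-- monotone closure step -/
lemma PaperMatroid.r_insert_eq_of_subset {D X : Finset α} {w : α} (hDX : D ⊆ X)
    (h : M.r (insert w D) = M.r D) : M.r (insert w X) = M.r X := by
  have hsub := M.r_submod X (insert w D)
  have h1 : X ∪ insert w D = insert w X := by
    ext x; simp only [mem_union, mem_insert]
    constructor
    · rintro (hx | hx | hx)
      · exact Or.inr hx
      · exact Or.inl hx
      · exact Or.inr (hDX hx)
    · rintro (hx | hx)
      · exact Or.inr (Or.inl hx)
      · exact Or.inl hx
  have h2 : D ⊆ X ∩ insert w D := subset_inter hDX (subset_insert w D)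
  have h3 := M.r_mono h2
  have h4 := M.r_mono (subset_insert w X)
  rw [h1, h] at hsub
  omega

/-- the exchange candidates of a dependent insertion span the new element -/
lemma PaperMatroid.circuit_cl {B : Finset α} {w : α} (hB : M.Indep B) (hw : w ∉ B)
    (hdep : ¬ M.Indep (insert w B)) :
    M.r (insert w (B.filter (fun v => M.Indep (insert w (B.erase v))))) =
      M.r (B.filter (fun v => M.Indep (insert w (B.erase v)))) := by
  have hbase : M.r (insert w B) = B.card := by
    have hge : B.card ≤ M.r (insert w B) := by
      rw [← M.r_indep hB]; exact M.r_mono (subset_insert w B)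
    have hle : M.r (insert w B) ≤ B.card := by
      by_contra hcon
      push_neg at hcon
      have hcard : (insert w B).card = B.card + 1 := card_insert_of_notMem hw
      have := M.r_le_card (insert w B)
      have : M.r (insert w B) = (insert w B).card := by omega
      exact hdep (M.indep_of_r_eq_card this)
    omega
  have key : ∀ S : Finset α, S ⊆ B.filter (fun v => ¬ M.Indep (insert w (B.erase v))) →
      M.r (insert w (B \ S)) = (B \ S).card := by
    intro S
    induction S using Finset.induction with
    | empty =>
      intro _
      simpa using hbase
    | @insert v S hv ih =>
      intro hsub
      have hS : S ⊆ B.filter _ := (subset_insert v S).trans hsub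
      have hIH := ih hS
      have hvB : v ∈ B := (mem_filter.1 (hsub (mem_insert_self v S))).1
      have hvdep : ¬ M.Indep (insert w (B.erase v)) :=
        (mem_filter.1 (hsub (mem_insert_self v S))).2
      -- rank of Y := insert w (B.erase v) is |B| - 1
      have hYcard : (insert w (B.erase v)).card = B.card := by
        rw [card_insert_of_notMem (fun h => hw (mem_of_mem_erase h)),
          card_erase_of_mem hvB]
        have := card_pos.2 ⟨v, hvB⟩
        omega
      have hY : M.r (insert w (B.erase v)) = B.card - 1 := by
        have hge : B.card - 1 ≤ M.r (insert w (B.erase v)) := by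
          have h1 : M.r (B.erase v) = B.card - 1 := by
            rw [M.r_indep (M.subset_closed hB (erase_subset v B)), card_erase_of_mem hvB]
          rw [← h1]; exact M.r_mono (subset_insert _ _)
        have hle : M.r (insert w (B.erase v)) ≤ B.card - 1 := by
          by_contra hcon
          push_neg at hcon
          have := M.r_le_card (insert w (B.erase v))
          rw [hYcard] at this
          have hpos := card_pos.2 ⟨v, hvB⟩
          have : M.r (insert w (B.erase v)) = (insert w (B.erase v)).card := by omega
          exact hvdep (M.indep_of_r_eq_card this)
        omega
      -- submodularity on X := insert w (B \ S) and Y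
      have hsubm := M.r_submod (insert w (B \ S)) (insert w (B.erase v))
      have hU : insert w (B \ S) ∪ insert w (B.erase v) = insert w B := by
        ext x
        simp only [mem_union, mem_insert, mem_sdiff, mem_erase]
        constructor
        · rintro ((h|h)|(h|h)) <;> try (exact Or.inl h)
          · exact Or.inr h.1
          · exact Or.inr h.2
        · rintro (h | h)
          · exact Or.inl (Or.inl h)
          · by_cases hxv : x = v
            · subst hxv
              have : x ∉ S := fun hxS => hv hxS
              exact Or.inl (Or.inr ⟨h, this⟩)
            · exact Or.inr (Or.inr ⟨hxv, h⟩)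
      have hI : insert w (B \ insert v S) ⊆ insert w (B \ S) ∩ insert w (B.erase v) := by
        intro x hx
        rcases mem_insert.1 hx with h | h
        · subst h; exact mem_inter.2 ⟨mem_insert_self _ _, mem_insert_self _ _⟩
        · obtain ⟨hxB, hxS⟩ := mem_sdiff.1 h
          refine mem_inter.2 ⟨mem_insert_of_mem (mem_sdiff.2 ⟨hxB, ?_⟩),
            mem_insert_of_mem (mem_erase.2 ⟨?_, hxB⟩)⟩
          · exact fun hxS2 => hxS (mem_insert_of_mem hxS2)
          · exact fun hxv => hxS (hxv ▸ mem_insert_self v S)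
      -- we only need: r (insert w (B \ insert v S)) ≤ r X + r Y - r (X ∪ Y)
      have hinter : M.r (insert w (B \ insert v S)) ≤
          M.r (insert w (B \ S) ∩ insert w (B.erase v)) := M.r_mono hI
      rw [hU, hbase, hIH, hY] at hsubm
      have hcard1 : (B \ S).card = B.card - S.card := card_sdiff_of_subset (hS.trans (filter_subset _ _))
      have hcard2 : (B \ insert v S).card = B.card - (insert v S).card :=
        card_sdiff_of_subset (hsub.trans (filter_subset _ _))
      have hScard : (insert v S).card = S.card + 1 := card_insert_of_notMem hv
      have hSle : (insert v S).card ≤ B.card := by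
        refine card_le_card ((hsub.trans (filter_subset _ _)))
      have hge : (B \ insert v S).card ≤ M.r (insert w (B \ insert v S)) := by
        have h1 : M.r (B \ insert v S) = (B \ insert v S).card :=
          M.r_indep (M.subset_closed hB (sdiff_subset))
        rw [← h1]; exact M.r_mono (subset_insert _ _)
      omega
  -- apply with S := complement filter
  have hcompl : B \ (B.filter (fun v => ¬ M.Indep (insert w (B.erase v)))) =
      B.filter (fun v => M.Indep (insert w (B.erase v))) := by
    ext x
    simp only [mem_sdiff, mem_filter]
    tauto
  have := key (B.filter (fun v => ¬ M.Indep (insert w (B.erase v)))) (Finset.Subset.refl _)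
  rw [hcompl] at this
  rw [this, M.r_indep (M.subset_closed hB (filter_subset _ _))]
variable {m : ℕ}

/-- exchange digraph arc: `u` can replace `v` in some `Bv i` -/
def pArc (M : PaperMatroid α) (Bv : Fin m → Finset α) (u v : α) : Prop :=
  ∃ i, v ∈ Bv i ∧ u ∉ Bv i ∧ M.Indep (insert u ((Bv i).erase v))

lemma pArc_ne {Bv : Fin m → Finset α} {u v : α} (h : pArc M Bv u v) :
    u ≠ v := by
  obtain ⟨i, h1, h2, _⟩ := h
  exact fun he => h2 (he ▸ h1)

/-- paths of a given length in the exchange digraph -/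
def pPathN (M : PaperMatroid α) (Bv : Fin m → Finset α) : ℕ → α → α → Prop
  | 0, a, c => a = c
  | (s+1), a, c => ∃ b, pArc M Bv a b ∧ pPathN M Bv s b c

lemma pPathN_snoc {Bv : Fin m → Finset α} :
    ∀ {s : ℕ} {a w v : α}, pPathN M Bv s a w → pArc M Bv w v → pPathN M Bv (s+1) a v := by
  intro s
  induction s with
  | zero => intro a w v h harc; exact ⟨v, h ▸ harc, rfl⟩
  | succ s ih =>
    intro a w v h harc
    obtain ⟨b, hab, hb⟩ := h
    exact ⟨b, hab, ih hb harc⟩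

/-- the new decomposition after exchanging `a` into `Bv i₀` for `u₁` -/
noncomputable def exchB (Bv : Fin m → Finset α) (i₀ : Fin m) (a u₁ : α) :
    Fin m → Finset α :=
  Function.update Bv i₀ (insert a ((Bv i₀).erase u₁))

lemma exchB_sum (Bv : Fin m → Finset α) (i₀ : Fin m) (a u₁ : α)
    (ha : a ∉ Bv i₀) (hu : u₁ ∈ Bv i₀) (j : α) :
    (∑ i, if j ∈ exchB Bv i₀ a u₁ i then (1:ℕ) else 0) + (if j = u₁ then 1 else 0)
      = (∑ i, if j ∈ Bv i then (1:ℕ) else 0) + (if j = a then 1 else 0) := by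
  have hsplit1 := Finset.sum_eq_sum_sdiff_singleton_add (Finset.mem_univ i₀)
    (fun i => if j ∈ exchB Bv i₀ a u₁ i then (1:ℕ) else 0)
  have hsplit2 := Finset.sum_eq_sum_sdiff_singleton_add (Finset.mem_univ i₀)
    (fun i => if j ∈ Bv i then (1:ℕ) else 0)
  have hdiff : ∑ i ∈ Finset.univ \ {i₀}, (if j ∈ exchB Bv i₀ a u₁ i then (1:ℕ) else 0)
      = ∑ i ∈ Finset.univ \ {i₀}, (if j ∈ Bv i then (1:ℕ) else 0) := by
    apply Finset.sum_congr rfl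
    intro i hi
    have hne : i ≠ i₀ := by
      intro h; simp [h] at hi
    rw [exchB, Function.update_of_ne hne]
  have hi₀ : exchB Bv i₀ a u₁ i₀ = insert a ((Bv i₀).erase u₁) := by
    rw [exchB, Function.update_self]
  rw [hsplit1, hsplit2, hdiff]
  simp only [hi₀]
  have hau : a ≠ u₁ := fun h => ha (h ▸ hu)
  by_cases hja : j = a
  · rw [hja]
    have h1 : a ∈ insert a ((Bv i₀).erase u₁) := mem_insert_self _ _
    rw [if_pos h1, if_neg hau, if_neg ha, if_pos rfl]
  · by_cases hju : j = u₁
    · rw [hju]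
      have hne' : ¬ u₁ = a := fun h => hau h.symm
      have hno : u₁ ∉ insert a ((Bv i₀).erase u₁) := by simp [hne']
      rw [if_neg hno, if_pos rfl, if_pos hu, if_neg hne']
    · have hiff : (j ∈ insert a ((Bv i₀).erase u₁)) ↔ j ∈ Bv i₀ := by
        simp [mem_insert, mem_erase, hja, hju]
      simp only [hiff, if_neg hja, if_neg hju]

/-- arcs not involving the special vertices survive the exchange -/
lemma arc_transfer {Bv : Fin m → Finset α} {i₀ : Fin m} {a u₁ u w : α}
    (hind : M.Indep (Bv i₀)) (hu₁ : u₁ ∈ Bv i₀) (haB : a ∉ Bv i₀)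
    (hI' : M.Indep (insert a ((Bv i₀).erase u₁)))
    (harc : pArc M Bv u w) (hua : u ≠ a) (hwu₁ : w ≠ u₁) (hnoarc : ¬ pArc M Bv a w) :
    pArc M (exchB Bv i₀ a u₁) u w := by
  obtain ⟨i, hwB, huB, hind2⟩ := harc
  by_cases hii : i = i₀
  · subst hii
    refine ⟨i, ?_, ?_, ?_⟩
    · rw [exchB, Function.update_self]
      exact mem_insert_of_mem (mem_erase.2 ⟨hwu₁, hwB⟩)
    · rw [exchB, Function.update_self]
      intro hmem
      rcases mem_insert.1 hmem with h | h
      · exact hua h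
      · exact huB (mem_of_mem_erase h)
    · rw [exchB, Function.update_self]
      -- the rank computation
      have hdep : ¬ M.Indep (insert a ((Bv i).erase w)) := by
        intro hcon
        exact hnoarc ⟨i, hwB, haB, hcon⟩
      set I := Bv i with hIdef
      have hwa : w ≠ a := fun h => haB (h ▸ hwB)
      set k' := I.card with hk'
      have hk'pos : 0 < k' := card_pos.2 ⟨u₁, hu₁⟩
      -- X := insert a (I.erase w), dependent, rank k' - 1
      have hXcard : (insert a (I.erase w)).card = k' := by
        rw [card_insert_of_notMem (fun h => haB (mem_of_mem_erase h)),
          card_erase_of_mem hwB]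
        omega
      have hX : M.r (insert a (I.erase w)) = k' - 1 := by
        have hge : k' - 1 ≤ M.r (insert a (I.erase w)) := by
          have h1 : M.r (I.erase w) = k' - 1 := by
            rw [M.r_indep (M.subset_closed hind (erase_subset w I)), card_erase_of_mem hwB]
          rw [← h1]; exact M.r_mono (subset_insert _ _)
        have hle : M.r (insert a (I.erase w)) ≤ k' - 1 := by
          by_contra hcon
          push_neg at hcon
          have h2 := M.r_le_card (insert a (I.erase w))
          rw [hXcard] at h2
          have : M.r (insert a (I.erase w)) = (insert a (I.erase w)).card := by
            rw [hXcard]; omega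
          exact hdep (M.indep_of_r_eq_card this)
        omega
      -- S := (insert a (I.erase u₁)).erase w
      set S := (insert a ((Bv i).erase u₁)).erase w with hSdef
      have hSsubI' : S ⊆ insert a ((Bv i).erase u₁) := erase_subset _ _
      have hSind : M.Indep S := M.subset_closed hI' hSsubI'
      have hwI' : w ∈ insert a ((Bv i).erase u₁) :=
        mem_insert_of_mem (mem_erase.2 ⟨hwu₁, hwB⟩)
      have hI'card : (insert a ((Bv i).erase u₁)).card = k' := by
        rw [card_insert_of_notMem (fun h => haB (mem_of_mem_erase h)),
          card_erase_of_mem hu₁]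
        omega
      have hScard : S.card = k' - 1 := by
        rw [hSdef, card_erase_of_mem hwI', hI'card]
      have hSsubX : S ⊆ insert a (I.erase w) := by
        intro x hx
        obtain ⟨hxw, hxmem⟩ := mem_erase.1 hx
        rcases mem_insert.1 hxmem with h | h
        · exact h ▸ mem_insert_self _ _
        · exact mem_insert_of_mem (mem_erase.2 ⟨hxw, mem_of_mem_erase h⟩)
      have huS : u ∉ S := fun h => by
        have := hSsubI' h
        rcases mem_insert.1 this with h1 | h1
        · exact hua h1
        · exact huB (mem_of_mem_erase h1)
      by_contra hcon2
      -- r (S ∪ {u}) = r S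
      have hrS : M.r S = k' - 1 := by rw [M.r_indep hSind, hScard]
      have h1 : M.r (S ∪ {u}) = M.r S := by
        have hle : M.r (S ∪ {u}) ≤ k' - 1 := by
          by_contra hcon
          push_neg at hcon
          have hcard : (S ∪ {u}).card = k' := by
            rw [union_comm, ← insert_eq, card_insert_of_notMem huS, hScard]
            omega
          have h2 := M.r_le_card (S ∪ {u})
          rw [hcard] at h2
          have : M.r (S ∪ {u}) = (S ∪ {u}).card := by rw [hcard]; omega
          have := M.indep_of_r_eq_card this
          rw [union_comm, ← insert_eq] at this
          exact hcon2 this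
        have hge : M.r S ≤ M.r (S ∪ {u}) := M.r_mono subset_union_left
        omega
      -- r (S ∪ (I.erase w)) = r S
      have h2 : M.r (S ∪ (I.erase w)) = M.r S := by
        have hsub : S ∪ (I.erase w) ⊆ insert a (I.erase w) := by
          apply union_subset hSsubX
          exact (subset_insert _ _)
        have hle := (M.r_mono hsub).trans (le_of_eq hX)
        have hge : M.r S ≤ M.r (S ∪ (I.erase w)) := M.r_mono subset_union_left
        omega
      have h3 := M.r_union_eq_of_two h2 h1
      -- but S ∪ (I.erase w ∪ {u}) contains insert u (I.erase w), independent of card k'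
      have h4 : M.r (insert u (I.erase w)) = k' := by
        rw [M.r_indep hind2, card_insert_of_notMem (fun h => huB (mem_of_mem_erase h)),
          card_erase_of_mem hwB]
        omega
      have h5 : insert u (I.erase w) ⊆ S ∪ (I.erase w ∪ {u}) := by
        intro x hx
        rcases mem_insert.1 hx with h | h
        · subst h; exact mem_union_right _ (mem_union_right _ (mem_singleton_self _))
        · exact mem_union_right _ (mem_union_left _ h)
      have h6 := M.r_mono h5
      rw [h3, hrS, h4] at h6
      omega
  · exact ⟨i, by rwa [exchB, Function.update_of_ne hii],
      by rwa [exchB, Function.update_of_ne hii],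
      by rwa [exchB, Function.update_of_ne hii]⟩
/-- guarded paths: every vertex after the start satisfies `G` -/
def pPathG (M : PaperMatroid α) (Bv : Fin m → Finset α) (G : α → Prop) :
    ℕ → α → α → Prop
  | 0, u, c => u = c
  | (s+1), u, c => ∃ w, pArc M Bv u w ∧ G w ∧ pPathG M Bv G s w c

lemma toG {Bv : Fin m → Finset α} {G : α → Prop} {c : α} :
    ∀ (s : ℕ) (u : α), pPathN M Bv s u c →
      (∀ j r w, j + r = s → 1 ≤ j → pPathN M Bv j u w → pPathN M Bv r w c → G w) →
      pPathG M Bv G s u c := by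
  intro s
  induction s with
  | zero => intro u h _; exact h
  | succ s ih =>
    intro u h hyp
    obtain ⟨w₁, harc, hrest⟩ := h
    refine ⟨w₁, harc, ?_, ?_⟩
    · exact hyp 1 s w₁ (by omega) le_rfl ⟨w₁, harc, rfl⟩ hrest
    · refine ih w₁ hrest ?_
      intro j r w h1 h2 h3 h4
      exact hyp (j+1) r w (by omega) (by omega) ⟨w₁, harc, h3⟩ h4

lemma Gtransfer {Bv : Fin m → Finset α} {i₀ : Fin m} {a u₁ c : α}
    (hind : M.Indep (Bv i₀)) (hu₁ : u₁ ∈ Bv i₀) (haB : a ∉ Bv i₀)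
    (hI' : M.Indep (insert a ((Bv i₀).erase u₁))) :
    ∀ (s : ℕ) (u : α), u ≠ a →
      pPathG M Bv (fun w => w ≠ a ∧ w ≠ u₁ ∧ ¬ pArc M Bv a w) s u c →
      pPathN M (exchB Bv i₀ a u₁) s u c := by
  intro s
  induction s with
  | zero => intro u _ h; exact h
  | succ s ih =>
    intro u hua h
    obtain ⟨w, harc, hG, hrest⟩ := h
    exact ⟨w, arc_transfer M hind hu₁ haB hI' harc hua hG.2.1 hG.2.2, ih w hG.1 hrest⟩

theorem augcore {k : ℕ} : ∀ (s : ℕ) (Bv : Fin m → Finset α) (a c : α),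
    (∀ i, M.Indep (Bv i) ∧ (Bv i).card = k) →
    pPathN M Bv s a c →
    ∃ B' : Fin m → Finset α, (∀ i, M.Indep (B' i) ∧ (B' i).card = k) ∧
      ∀ j, (∑ i, if j ∈ B' i then (1:ℕ) else 0) + (if j = c then 1 else 0)
         = (∑ i, if j ∈ Bv i then (1:ℕ) else 0) + (if j = a then 1 else 0) := by
  intro s
  induction s using Nat.strong_induction_on with
  | _ s IH =>
  intro Bv a c hB hpath
  cases s with
  | zero =>
    have hac : a = c := hpath
    subst hac
    exact ⟨Bv, hB, fun j => rfl⟩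
  | succ s =>
    obtain ⟨u₁, harc1, htail⟩ := hpath
    by_cases hbad : ∃ j r w, j + r = s ∧ 1 ≤ j ∧ pPathN M Bv j u₁ w ∧ pPathN M Bv r w c ∧
        (w = a ∨ w = u₁ ∨ pArc M Bv a w)
    · obtain ⟨j, r, w, hjr, hj1, hp1, hp2, hcase⟩ := hbad
      rcases hcase with h | h | h
      · exact IH r (by omega) Bv a c hB (h ▸ hp2)
      · exact IH (r+1) (by omega) Bv a c hB ⟨u₁, harc1, h ▸ hp2⟩
      · exact IH (r+1) (by omega) Bv a c hB ⟨w, h, hp2⟩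
    · push_neg at hbad
      have hau₁ : a ≠ u₁ := pArc_ne M harc1
      obtain ⟨i₀, hu₁B, haB, hI'⟩ := harc1
      have hGpath : pPathG M Bv (fun w => w ≠ a ∧ w ≠ u₁ ∧ ¬ pArc M Bv a w) s u₁ c :=
        toG M s u₁ htail (fun j r w h1 h2 h3 h4 => hbad j r w h1 h2 h3 h4)
      have hpath1 : pPathN M (exchB Bv i₀ a u₁) s u₁ c :=
        Gtransfer M (hB i₀).1 hu₁B haB hI' s u₁ (fun h => hau₁ h.symm) hGpath
      have hB1 : ∀ i, M.Indep (exchB Bv i₀ a u₁ i) ∧ (exchB Bv i₀ a u₁ i).card = k := by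
        intro i
        by_cases hii : i = i₀
        · subst hii
          rw [exchB, Function.update_self]
          refine ⟨hI', ?_⟩
          rw [card_insert_of_notMem (fun h => haB (mem_of_mem_erase h)),
            card_erase_of_mem hu₁B]
          have := card_pos.2 ⟨u₁, hu₁B⟩
          have := (hB i).2
          omega
        · rw [exchB, Function.update_of_ne hii]
          exact hB i
      obtain ⟨B'', hB'', hsum⟩ := IH s (by omega) (exchB Bv i₀ a u₁) u₁ c hB1 hpath1
      refine ⟨B'', hB'', fun j => ?_⟩
      rw [hsum j, exchB_sum Bv i₀ a u₁ haB hu₁B j]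
/-- the augmentation theorem: if the rank condition holds, the leftover can be moved to `c` -/
theorem aug {k : ℕ} (Bv : Fin m → Finset α) (a c : α)
    (hB : ∀ i, M.Indep (Bv i) ∧ (Bv i).card = k)
    (H : ∀ A : Finset α, c ∉ A →
      ∑ j ∈ A, ((∑ i, if j ∈ Bv i then (1:ℕ) else 0) + (if j = a then 1 else 0))
        ≤ m * min (M.r A) k) :
    ∃ B' : Fin m → Finset α, (∀ i, M.Indep (B' i) ∧ (B' i).card = k) ∧
      ∀ j, (∑ i, if j ∈ B' i then (1:ℕ) else 0) + (if j = c then 1 else 0)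
         = (∑ i, if j ∈ Bv i then (1:ℕ) else 0) + (if j = a then 1 else 0) := by
  by_cases hreach : ∃ s, pPathN M Bv s a c
  · obtain ⟨s, hs⟩ := hreach
    exact augcore M s Bv a c hB hs
  · exfalso
    set R := Finset.univ.filter (fun v => ∃ s, pPathN M Bv s a v) with hRdef
    have haR : a ∈ R := by
      simp only [hRdef, mem_filter, mem_univ, true_and]
      exact ⟨0, rfl⟩
    have hcR : c ∉ R := by
      simp only [hRdef, mem_filter, mem_univ, true_and]
      exact hreach
    have hclosed : ∀ w ∈ R, ∀ v, pArc M Bv w v → v ∈ R := by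
      intro w hw v harc
      simp only [hRdef, mem_filter, mem_univ, true_and] at hw ⊢
      obtain ⟨s, hs⟩ := hw
      exact ⟨s+1, pPathN_snoc M hs harc⟩
    -- each block meets R in at least min (r R) k elements
    have hblock : ∀ i, min (M.r R) k ≤ (Bv i ∩ R).card := by
      intro i
      by_cases hcase : ∃ w ∈ R, w ∉ Bv i ∧ M.Indep (insert w (Bv i))
      · obtain ⟨w, hwR, hwB, hwind⟩ := hcase
        have hsub : Bv i ⊆ R := by
          intro v hv
          refine hclosed w hwR v ⟨i, hv, hwB, ?_⟩
          exact M.subset_closed hwind (insert_subset_insert w (erase_subset v (Bv i)))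
        have : Bv i ∩ R = Bv i := inter_eq_left.2 hsub
        rw [this, (hB i).2]
        exact min_le_right _ _
      · push_neg at hcase
        have hforall : ∀ w ∈ R, M.r (insert w (Bv i ∩ R)) = M.r (Bv i ∩ R) := by
          intro w hwR
          by_cases hwB : w ∈ Bv i
          · rw [insert_eq_self.2 (mem_inter.2 ⟨hwB, hwR⟩)]
          · have hdep := hcase w hwR hwB
            have hcirc := M.circuit_cl (hB i).1 hwB hdep
            have hDsub : (Bv i).filter (fun v => M.Indep (insert w ((Bv i).erase v)))
                ⊆ Bv i ∩ R := by
              intro v hv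
              obtain ⟨hv1, hv2⟩ := mem_filter.1 hv
              exact mem_inter.2 ⟨hv1, hclosed w hwR v ⟨i, hv1, hwB, hv2⟩⟩
            exact M.r_insert_eq_of_subset hDsub hcirc
        have hru : M.r ((Bv i ∩ R) ∪ R) = M.r (Bv i ∩ R) :=
          M.r_union_eq_of_forall hforall
        have h1 : M.r R ≤ M.r (Bv i ∩ R) := by
          rw [← hru]; exact M.r_mono subset_union_right
        have h2 : M.r (Bv i ∩ R) = (Bv i ∩ R).card :=
          M.r_indep (M.subset_closed (hB i).1 inter_subset_left)
        calc min (M.r R) k ≤ M.r R := min_le_left _ _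
          _ ≤ (Bv i ∩ R).card := by omega
    -- compute the total weight of R
    have hsum : ∑ j ∈ R, ((∑ i, if j ∈ Bv i then (1:ℕ) else 0) + (if j = a then 1 else 0))
        = (∑ i, (Bv i ∩ R).card) + 1 := by
      rw [Finset.sum_add_distrib]
      congr 1
      · rw [Finset.sum_comm]
        apply Finset.sum_congr rfl
        intro i _
        rw [Finset.sum_boole, Finset.filter_mem_eq_inter, inter_comm]
        simp
      · rw [Finset.sum_ite_eq' R a (fun _ => (1:ℕ))]
        exact if_pos haR
    have hHH := H R hcR
    rw [hsum] at hHH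
    have hlow : m * min (M.r R) k ≤ ∑ i, (Bv i ∩ R).card := by
      calc m * min (M.r R) k = ∑ _i : Fin m, min (M.r R) k := by
            rw [Finset.sum_const, Finset.card_univ, Fintype.card_fin, smul_eq_mul]
        _ ≤ ∑ i, (Bv i ∩ R).card := Finset.sum_le_sum (fun i _ => hblock i)
    omega
section TopLevel

variable {n : ℕ}

/-- a 1-system is an indicator -/
lemma unit_repr {f : Fin n → ℕ} (h : ∑ j, f j = 1) :
    ∃ a, f = fun j => if j = a then 1 else 0 := by
  classical
  have hex : ∃ a, f a ≠ 0 := by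
    by_contra hcon
    push_neg at hcon
    rw [Finset.sum_eq_zero (fun j _ => hcon j)] at h
    omega
  obtain ⟨a, ha⟩ := hex
  have hsplit := Finset.sum_eq_sum_sdiff_singleton_add (Finset.mem_univ a) f
  rw [hsplit] at h
  have hzero : ∀ j ∈ Finset.univ \ {a}, f j = 0 := by
    rw [← Finset.sum_eq_zero_iff]
    omega
  refine ⟨a, funext fun j => ?_⟩
  by_cases hja : j = a
  · subst hja
    rw [if_pos rfl]
    omega
  · simp only [if_neg hja]
    exact hzero j (Finset.mem_sdiff.2 ⟨Finset.mem_univ j, by simp [hja]⟩)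

/-- bases are exactly indicators of independent `k`-sets -/
lemma base_repr {M : PaperMatroid (Fin n)} {k : ℕ} {f : Fin n → ℕ} (h : IsBaseSys M k f) :
    ∃ S : Finset (Fin n), M.Indep S ∧ S.card = k ∧
      f = fun j => if j ∈ S then 1 else 0 := by
  classical
  obtain ⟨hind, hle, hsum⟩ := h
  refine ⟨suppSys f, hind, ?_, ?_⟩
  · have h1 : ∑ j, f j = ∑ j ∈ suppSys f, f j := by
      rw [Finset.sum_subset (Finset.subset_univ (suppSys f))]
      intro x _ hx
      simp only [suppSys, Finset.mem_filter, Finset.mem_univ, true_and, not_not] at hx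
      exact hx
    have h2 : ∑ j ∈ suppSys f, f j = (suppSys f).card := by
      rw [Finset.card_eq_sum_ones]
      apply Finset.sum_congr rfl
      intro j hj
      simp only [suppSys, Finset.mem_filter] at hj
      have := hle j
      omega
    omega
  · funext j
    by_cases hj : j ∈ suppSys f
    · simp only [if_pos hj]
      simp only [suppSys, Finset.mem_filter] at hj
      have := hle j
      omega
    · simp only [if_neg hj]
      simp only [suppSys, Finset.mem_filter, Finset.mem_univ, true_and, not_not] at hj
      exact hj

/-- indicators of independent `k`-sets are bases -/
lemma base_repr' {M : PaperMatroid (Fin n)} {k : ℕ} {S : Finset (Fin n)}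
    (hind : M.Indep S) (hcard : S.card = k) :
    IsBaseSys M k (fun j => if j ∈ S then 1 else 0) := by
  classical
  have hsupp : suppSys (fun j => if j ∈ S then (1:ℕ) else 0) = S := by
    ext j
    simp only [suppSys, Finset.mem_filter, Finset.mem_univ, true_and]
    by_cases hj : j ∈ S <;> simp [hj]
  refine ⟨by rw [hsupp]; exact hind, fun j => by by_cases hj : j ∈ S <;> simp [hj], ?_⟩
  rw [← hcard, Finset.card_eq_sum_ones]
  rw [Finset.sum_ite_mem, Finset.univ_inter]

/-- representation of strong systems in finset form -/
lemma strong_repr {M : PaperMatroid (Fin n)} {k m : ℕ} {x : Fin n → ℕ}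
    (h : IsStrongSys M k m 1 x) :
    (∑ j, x j = m * k + 1) ∧
    ∃ (Bv : Fin m → Finset (Fin n)) (a : Fin n),
      (∀ i, M.Indep (Bv i) ∧ (Bv i).card = k) ∧
      ∀ j, x j = (∑ i, if j ∈ Bv i then (1:ℕ) else 0) + (if j = a then 1 else 0) := by
  classical
  obtain ⟨hsum, last, hlast, B, hbase, heq⟩ := h
  refine ⟨hsum, ?_⟩
  choose S hS1 hS2 hS3 using fun i => base_repr (hbase i)
  obtain ⟨a, hA⟩ := unit_repr hlast
  refine ⟨S, a, fun i => ⟨hS1 i, hS2 i⟩, fun j => ?_⟩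
  have := congrFun heq j
  rw [this]
  simp only [Pi.add_apply, Finset.sum_apply]
  congr 1
  · apply Finset.sum_congr rfl
    intro i _
    rw [hS3 i]
  · rw [hA]

/-- converse: finset representation gives a strong system -/
lemma strong_repr' {M : PaperMatroid (Fin n)} {k m : ℕ} {x : Fin n → ℕ}
    (Bv : Fin m → Finset (Fin n)) (a : Fin n)
    (hB : ∀ i, M.Indep (Bv i) ∧ (Bv i).card = k)
    (hx : ∀ j, x j = (∑ i, if j ∈ Bv i then (1:ℕ) else 0) + (if j = a then 1 else 0)) :
    IsStrongSys M k m 1 x := by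
  classical
  have hsum1 : ∑ j, (if j = a then (1:ℕ) else 0) = 1 := by
    rw [Finset.sum_ite_eq' Finset.univ a (fun _ => (1:ℕ))]
    simp
  have hsumB : ∀ i, ∑ j, (if j ∈ Bv i then (1:ℕ) else 0) = k := by
    intro i
    rw [Finset.sum_ite_mem, Finset.univ_inter, ← (hB i).2, Finset.card_eq_sum_ones]
  constructor
  · have : ∑ j, x j = ∑ j, ((∑ i, if j ∈ Bv i then (1:ℕ) else 0) + (if j = a then 1 else 0)) :=
      Finset.sum_congr rfl (fun j _ => hx j)
    rw [this, Finset.sum_add_distrib, hsum1, Finset.sum_comm]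
    have : ∑ i, ∑ j, (if j ∈ Bv i then (1:ℕ) else 0) = ∑ _i : Fin m, k :=
      Finset.sum_congr rfl (fun i _ => hsumB i)
    rw [this]
    simp [mul_comm]
  · refine ⟨fun j => if j = a then 1 else 0, hsum1,
      fun i => fun j => if j ∈ Bv i then 1 else 0, fun i => base_repr' (hB i).1 (hB i).2, ?_⟩
    funext j
    simp only [Pi.add_apply, Finset.sum_apply]
    exact hx j

end TopLevel
section Main

variable {n : ℕ} (M : PaperMatroid (Fin n)) (k m : ℕ) (T : Fin n → ℕ)

/-- second components of good decompositions, in concrete form -/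
def OkSys (x : Fin n → ℕ) : Prop :=
  (∀ j, x j ≤ T j) ∧ (∑ j, x j = m * k + 1) ∧
  ∃ (Bv : Fin m → Finset (Fin n)) (a : Fin n),
    (∀ i, M.Indep (Bv i) ∧ (Bv i).card = k) ∧
    ∀ j, x j = (∑ i, if j ∈ Bv i then (1:ℕ) else 0) + (if j = a then 1 else 0)

def tightS (x : Fin n → ℕ) (A : Finset (Fin n)) : Prop :=
  ∑ j ∈ A, x j = m * min (M.r A) k + 1

/-- the intersection of all tight sets -/
noncomputable def interT (x : Fin n → ℕ) : Finset (Fin n) :=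
  Finset.univ.filter (fun j => ∀ A, tightS M k m x A → j ∈ A)

lemma interT_subset {x : Fin n → ℕ} {A : Finset (Fin n)} (hA : tightS M k m x A) :
    interT M k m x ⊆ A := by
  intro j hj
  rw [interT, Finset.mem_filter] at hj
  exact hj.2 A hA

lemma mem_interT {x : Fin n → ℕ} {c : Fin n}
    (h : ∀ A, tightS M k m x A → c ∈ A) : c ∈ interT M k m x := by
  rw [interT, Finset.mem_filter]
  exact ⟨Finset.mem_univ c, h⟩

lemma weight_split (Bv : Fin m → Finset (Fin n)) (a : Fin n) (A : Finset (Fin n)) :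
    ∑ j ∈ A, ((∑ i, if j ∈ Bv i then (1:ℕ) else 0) + (if j = a then 1 else 0))
      = (∑ i, (Bv i ∩ A).card) + (if a ∈ A then 1 else 0) := by
  rw [Finset.sum_add_distrib]
  congr 1
  · rw [Finset.sum_comm]
    apply Finset.sum_congr rfl
    intro i _
    rw [Finset.sum_boole, Finset.filter_mem_eq_inter, inter_comm]
    simp
  · rw [Finset.sum_ite_eq' A a (fun _ => (1:ℕ))]

lemma ok_bound {x : Fin n → ℕ} (hx : OkSys M k m T x) (A : Finset (Fin n)) :
    ∑ j ∈ A, x j ≤ m * min (M.r A) k + 1 := by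
  obtain ⟨-, -, Bv, a, hB, hrepr⟩ := hx
  have h1 : ∑ j ∈ A, x j =
      ∑ j ∈ A, ((∑ i, if j ∈ Bv i then (1:ℕ) else 0) + (if j = a then 1 else 0)) :=
    Finset.sum_congr rfl (fun j _ => hrepr j)
  rw [h1, weight_split]
  have h2 : ∀ i, (Bv i ∩ A).card ≤ min (M.r A) k := by
    intro i
    refine le_min ?_ ?_
    · exact M.card_le_r inter_subset_right (M.subset_closed (hB i).1 inter_subset_left)
    · rw [← (hB i).2]
      exact card_le_card inter_subset_left
  have h3 : ∑ i, (Bv i ∩ A).card ≤ m * min (M.r A) k := by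
    calc ∑ i, (Bv i ∩ A).card ≤ ∑ _i : Fin m, min (M.r A) k :=
          Finset.sum_le_sum (fun i _ => h2 i)
      _ = m * min (M.r A) k := by
          rw [Finset.sum_const, Finset.card_univ, Fintype.card_fin, smul_eq_mul]
  by_cases ha : a ∈ A <;> simp [ha] <;> omega

lemma min_submod (A B : Finset (Fin n)) :
    min (M.r (A ∪ B)) k + min (M.r (A ∩ B)) k ≤ min (M.r A) k + min (M.r B) k := by
  have h1 := M.r_submod A B
  have h2 := M.r_mono (inter_subset_left (s₁ := A) (s₂ := B))
  have h3 := M.r_mono (inter_subset_right (s₁ := A) (s₂ := B))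
  have h4 := M.r_mono (subset_union_left (s₁ := A) (s₂ := B))
  have h5 := M.r_mono (subset_union_right (s₁ := A) (s₂ := B))
  omega

lemma tight_inter {x : Fin n → ℕ} (hx : OkSys M k m T x) {A B : Finset (Fin n)}
    (hA : tightS M k m x A) (hB : tightS M k m x B) : tightS M k m x (A ∩ B) := by
  have hsum := Finset.sum_union_inter (s₁ := A) (s₂ := B) (f := x)
  have h1 := ok_bound M k m T hx (A ∪ B)
  have h2 := ok_bound M k m T hx (A ∩ B)
  have h3 := min_submod M k A B
  have h3' : m * (min (M.r (A ∪ B)) k + min (M.r (A ∩ B)) k)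
      ≤ m * (min (M.r A) k + min (M.r B) k) := Nat.mul_le_mul_left m h3
  rw [mul_add, mul_add] at h3'
  rw [tightS] at hA hB ⊢
  omega

lemma tight_univ {x : Fin n → ℕ} (hkr : k ≤ M.r Finset.univ)
    (hsum : ∑ j, x j = m * k + 1) : tightS M k m x Finset.univ := by
  rw [tightS, min_eq_right hkr, hsum]

lemma interT_tight {x : Fin n → ℕ} (hkr : k ≤ M.r Finset.univ)
    (hx : OkSys M k m T x) : tightS M k m x (interT M k m x) := by
  classical
  set F := (Finset.univ : Finset (Finset (Fin n))).filter (fun A => tightS M k m x A)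
    with hF
  have hne : F.Nonempty := ⟨Finset.univ, by
    simp only [hF, Finset.mem_filter, Finset.mem_univ, true_and]
    exact tight_univ M k m hkr hx.2.1⟩
  obtain ⟨A₀, hA₀F, hmin⟩ := Finset.exists_min_image F Finset.card hne
  have hA₀tight : tightS M k m x A₀ := by
    simp only [hF, Finset.mem_filter, Finset.mem_univ, true_and] at hA₀F
    exact hA₀F
  have hA₀sub : ∀ B, tightS M k m x B → A₀ ⊆ B := by
    intro B hB
    have hIB : tightS M k m x (A₀ ∩ B) := tight_inter M k m T hx hA₀tight hB
    have hmem : A₀ ∩ B ∈ F := by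
      simp only [hF, Finset.mem_filter, Finset.mem_univ, true_and]
      exact hIB
    have hcard := hmin _ hmem
    have : A₀ ∩ B = A₀ :=
      Finset.eq_of_subset_of_card_le inter_subset_left (by omega)
    rw [← this]
    exact inter_subset_right
  have : interT M k m x = A₀ := by
    apply Finset.Subset.antisymm
    · exact interT_subset M k m hA₀tight
    · intro j hj
      exact mem_interT M k m (fun A hA => hA₀sub A hA hj)
  rw [this]
  exact hA₀tight

/-- the key move: shift the leftover of `x` from `c` (in every tight set) to `b` -/
lemma move {x : Fin n → ℕ} (hx : OkSys M k m T x) {c b : Fin n}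
    (hc : c ∈ interT M k m x) (hbT : x b + 1 ≤ T b) :
    ∃ (B' : Fin m → Finset (Fin n)),
      (∀ i, M.Indep (B' i) ∧ (B' i).card = k) ∧
      (∀ j, (∑ i, if j ∈ B' i then (1:ℕ) else 0) + (if j = c then 1 else 0) = x j) ∧
      OkSys M k m T (fun j => (∑ i, if j ∈ B' i then (1:ℕ) else 0) + (if j = b then 1 else 0)) := by
  classical
  obtain ⟨hxT, hxsum, Bv, a, hB, hrepr⟩ := hx
  have hintight : ∀ A, tightS M k m x A → c ∈ A := by
    intro A hA
    rw [interT, Finset.mem_filter] at hc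
    exact hc.2 A hA
  have H : ∀ A : Finset (Fin n), c ∉ A →
      ∑ j ∈ A, ((∑ i, if j ∈ Bv i then (1:ℕ) else 0) + (if j = a then 1 else 0))
        ≤ m * min (M.r A) k := by
    intro A hcA
    have h1 : ∑ j ∈ A, ((∑ i, if j ∈ Bv i then (1:ℕ) else 0) + (if j = a then 1 else 0))
        = ∑ j ∈ A, x j := Finset.sum_congr rfl (fun j _ => (hrepr j).symm)
    rw [h1]
    have h2 : ¬ tightS M k m x A := fun h => hcA (hintight A h)
    have h3 := ok_bound M k m T ⟨hxT, hxsum, Bv, a, hB, hrepr⟩ A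
    rw [tightS] at h2
    omega
  obtain ⟨B', hB', hq⟩ := aug M Bv a c hB H
  have hq' : ∀ j, (∑ i, if j ∈ B' i then (1:ℕ) else 0) + (if j = c then 1 else 0) = x j := by
    intro j
    rw [hq j, ← hrepr j]
  refine ⟨B', hB', hq', ?_, ?_, ?_⟩
  · -- pointwise bound
    intro j
    have h1 := hq' j
    show (∑ i, if j ∈ B' i then (1:ℕ) else 0) + (if j = b then 1 else 0) ≤ T j
    by_cases hjb : j = b
    · subst hjb
      rw [if_pos rfl]
      have := hxT j
      omega
    · rw [if_neg hjb]
      have := hxT j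
      omega
  · -- total sum
    have h1 : ∑ j, ((∑ i, if j ∈ B' i then (1:ℕ) else 0) + (if j = c then 1 else 0))
        = ∑ j, x j := Finset.sum_congr rfl (fun j _ => hq' j)
    rw [Finset.sum_add_distrib] at h1
    have h2 : ∑ j, (if j = c then (1:ℕ) else 0) = 1 := by
      rw [Finset.sum_ite_eq' Finset.univ c (fun _ => (1:ℕ))]
      simp
    have h3 : ∑ j, ((∑ i, if j ∈ B' i then (1:ℕ) else 0) + (if j = b then 1 else 0))
        = (∑ j, ∑ i, if j ∈ B' i then (1:ℕ) else 0) + ∑ j, (if j = b then (1:ℕ) else 0) :=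
      Finset.sum_add_distrib
    have h4 : ∑ j, (if j = b then (1:ℕ) else 0) = 1 := by
      rw [Finset.sum_ite_eq' Finset.univ b (fun _ => (1:ℕ))]
      simp
    rw [h3, h4]
    omega
  · exact ⟨B', b, hB', fun j => rfl⟩

end Main
section Main2

variable {n : ℕ} (M : PaperMatroid (Fin n)) (k m : ℕ) (T : Fin n → ℕ)

def pairOf (x : Fin n → ℕ) : (Fin n → ℕ) × (Fin n → ℕ) := (fun j => T j - x j, x)

lemma good_of_ok {x : Fin n → ℕ} (hx : OkSys M k m T x) :
    GoodDecomp M k m T (pairOf T x) := by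
  obtain ⟨hxT, hsum, Bv, a, hB, hrepr⟩ := hx
  constructor
  · funext j
    rw [Pi.add_apply]
    show T j = (T j - x j) + x j
    have := hxT j
    omega
  · exact strong_repr' Bv a hB hrepr

lemma locally_symm {p q : (Fin n → ℕ) × (Fin n → ℕ)}
    (h : LocallyRelated M k m p q) : LocallyRelated M k m q p := by
  obtain ⟨B, hB, s, t, hs, ht, h1, h2⟩ := h
  exact ⟨B, hB, t, s, ht, hs, h2, h1⟩

lemma step_rel {x : Fin n → ℕ} (hx : OkSys M k m T x) {c b : Fin n}
    (hc : c ∈ interT M k m x) (hbT : x b + 1 ≤ T b) :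
    ∃ x', OkSys M k m T x' ∧
      (∀ j, x' j + (if j = c then 1 else 0) = x j + (if j = b then 1 else 0)) ∧
      GoodDecomp M k m T (pairOf T x) ∧ GoodDecomp M k m T (pairOf T x') ∧
      LocallyRelated M k m (pairOf T x) (pairOf T x') := by
  classical
  obtain ⟨B', hB', hq, hok'⟩ := move M k m T hx hc hbT
  refine ⟨fun j => (∑ i, if j ∈ B' i then (1:ℕ) else 0) + (if j = b then 1 else 0),
    hok', ?_, good_of_ok M k m T hx, good_of_ok M k m T hok', ?_⟩
  · intro j
    have h1 := hq j
    show ((∑ i, if j ∈ B' i then (1:ℕ) else 0) + (if j = b then 1 else 0))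
      + (if j = c then 1 else 0) = x j + (if j = b then 1 else 0)
    omega
  · refine ⟨fun i => fun j => if j ∈ B' i then (1:ℕ) else 0,
      fun i => base_repr' (hB' i).1 (hB' i).2,
      fun j => if j = c then 1 else 0, fun j => if j = b then 1 else 0, ?_, ?_, ?_, ?_⟩
    · rw [Finset.sum_ite_eq' Finset.univ c (fun _ => (1:ℕ))]; simp
    · rw [Finset.sum_ite_eq' Finset.univ b (fun _ => (1:ℕ))]; simp
    · funext j
      rw [Pi.add_apply, Finset.sum_apply]
      exact (hq j).symm
    · funext j
      rw [Pi.add_apply, Finset.sum_apply]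
      rfl

def dS {n : ℕ} (x y : Fin n → ℕ) : ℕ := ∑ j, ((x j - y j) + (y j - x j))

lemma ex_lt {x y : Fin n → ℕ} (hne : x ≠ y) (hsum : ∑ j, x j = ∑ j, y j) :
    ∃ b, x b < y b := by
  by_contra h
  push_neg at h
  obtain ⟨j, hj⟩ := Function.ne_iff.1 hne
  have hlt : y j < x j := lt_of_le_of_ne (h j) (fun he => hj he.symm)
  have := Finset.sum_lt_sum (fun i _ => h i) ⟨j, Finset.mem_univ j, hlt⟩
  omega

lemma connect (hkr : k ≤ M.r Finset.univ) :
    ∀ (μ : ℕ) (x y : Fin n → ℕ), OkSys M k m T x → OkSys M k m T y →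
    dS x y * (m*k+2) + (∑ j ∈ interT M k m y, x j) ≤ μ →
    Relation.ReflTransGen (fun p q => GoodDecomp M k m T p ∧ GoodDecomp M k m T q ∧
      LocallyRelated M k m p q) (pairOf T x) (pairOf T y) := by
  classical
  intro μ
  induction μ using Nat.strong_induction_on with
  | _ μ IH =>
  intro x y hx hy hμ
  by_cases hxy : x = y
  · subst hxy; exact Relation.ReflTransGen.refl
  have hsums : ∑ j, x j = ∑ j, y j := by rw [hx.2.1, hy.2.1]
  obtain ⟨b, hb⟩ := ex_lt hxy hsums
  obtain ⟨b', hb'⟩ := ex_lt (fun h => hxy h.symm) hsums.symm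
  have hd2 : 2 ≤ dS x y := by
    have hbb' : b ≠ b' := by intro h; subst h; omega
    have hsp : (x b - y b + (y b - x b)) + (x b' - y b' + (y b' - x b')) ≤ dS x y := by
      have h2 := Finset.sum_le_sum_of_subset (f := fun j => (x j - y j) + (y j - x j))
        (Finset.subset_univ {b, b'})
      rwa [Finset.sum_pair hbb'] at h2
    omega
  by_cases hC1 : ∃ c, c ∈ interT M k m x ∧ y c < x c
  · obtain ⟨c, hcA, hcy⟩ := hC1
    have hbT : x b + 1 ≤ T b := le_trans (by omega) (hy.1 b)
    obtain ⟨x', hx', hptw, hg1, hg2, hloc⟩ := step_rel M k m T hx hcA hbT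
    have hcb : c ≠ b := by intro h; subst h; omega
    have hptd : ∀ j, (x' j - y j) + (y j - x' j) +
        ((if j = c then 1 else 0) + (if j = b then 1 else 0))
        = (x j - y j) + (y j - x j) := by
      intro j
      have h1 := hptw j
      by_cases hjc : j = c
      · have hjb : ¬ j = b := fun h => hcb (hjc.symm.trans h)
        have hyj : y j < x j := by rw [hjc]; exact hcy
        rw [if_pos hjc, if_neg hjb] at h1 ⊢
        omega
      · by_cases hjb : j = b
        · have hyj : x j < y j := by rw [hjb]; exact hb
          rw [if_neg hjc, if_pos hjb] at h1 ⊢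
          omega
        · rw [if_neg hjc, if_neg hjb] at h1 ⊢
          omega
    have hdd : dS x' y + 2 = dS x y := by
      unfold dS
      have e1 : ∑ j, (if j = c then (1:ℕ) else 0) = 1 := by
        rw [Finset.sum_ite_eq' Finset.univ c (fun _ => (1:ℕ))]; simp
      have e2 : ∑ j, (if j = b then (1:ℕ) else 0) = 1 := by
        rw [Finset.sum_ite_eq' Finset.univ b (fun _ => (1:ℕ))]; simp
      have e3 : ∑ j, ((if j = c then (1:ℕ) else 0) + (if j = b then 1 else 0)) = 2 := by
        rw [Finset.sum_add_distrib, e1, e2]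
      have hL : ∑ j, ((x' j - y j) + (y j - x' j))
          + ∑ j, ((if j = c then (1:ℕ) else 0) + (if j = b then 1 else 0))
          = ∑ j, ((x j - y j) + (y j - x j)) := by
        rw [← Finset.sum_add_distrib]
        exact Finset.sum_congr rfl (fun j _ => hptd j)
      omega
    have hs' : ∑ j ∈ interT M k m y, x' j ≤ m*k+1 := by
      calc ∑ j ∈ interT M k m y, x' j ≤ ∑ j, x' j :=
            Finset.sum_le_sum_of_subset (Finset.subset_univ _)
        _ = m*k+1 := hx'.2.1
    have hmul : dS x' y * (m*k+2) + 2*(m*k+2) = dS x y * (m*k+2) := by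
      rw [← hdd]; ring
    have hnext : dS x' y * (m*k+2) + (∑ j ∈ interT M k m y, x' j) ≤ μ - 1 := by
      omega
    have hμ1 : μ - 1 < μ := by omega
    exact Relation.ReflTransGen.head ⟨hg1, hg2, hloc⟩ (IH (μ-1) hμ1 x' y hx' hy hnext)
  by_cases hC2 : ∃ c, c ∈ interT M k m y ∧ x c < y c
  · obtain ⟨c, hcA, hcx⟩ := hC2
    have hbT : y b' + 1 ≤ T b' := le_trans (by omega) (hx.1 b')
    obtain ⟨y', hy', hptw, hg1, hg2, hloc⟩ := step_rel M k m T hy hcA hbT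
    have hcb : c ≠ b' := by intro h; subst h; omega
    have hptd : ∀ j, (x j - y' j) + (y' j - x j) +
        ((if j = c then 1 else 0) + (if j = b' then 1 else 0))
        = (x j - y j) + (y j - x j) := by
      intro j
      have h1 := hptw j
      by_cases hjc : j = c
      · have hjb : ¬ j = b' := fun h => hcb (hjc.symm.trans h)
        have hyj : x j < y j := by rw [hjc]; exact hcx
        rw [if_pos hjc, if_neg hjb] at h1 ⊢
        omega
      · by_cases hjb : j = b'
        · have hyj : y j < x j := by rw [hjb]; exact hb'
          rw [if_neg hjc, if_pos hjb] at h1 ⊢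
          omega
        · rw [if_neg hjc, if_neg hjb] at h1 ⊢
          omega
    have hdd : dS x y' + 2 = dS x y := by
      unfold dS
      have e1 : ∑ j, (if j = c then (1:ℕ) else 0) = 1 := by
        rw [Finset.sum_ite_eq' Finset.univ c (fun _ => (1:ℕ))]; simp
      have e2 : ∑ j, (if j = b' then (1:ℕ) else 0) = 1 := by
        rw [Finset.sum_ite_eq' Finset.univ b' (fun _ => (1:ℕ))]; simp
      have e3 : ∑ j, ((if j = c then (1:ℕ) else 0) + (if j = b' then 1 else 0)) = 2 := by
        rw [Finset.sum_add_distrib, e1, e2]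
      have hL : ∑ j, ((x j - y' j) + (y' j - x j))
          + ∑ j, ((if j = c then (1:ℕ) else 0) + (if j = b' then 1 else 0))
          = ∑ j, ((x j - y j) + (y j - x j)) := by
        rw [← Finset.sum_add_distrib]
        exact Finset.sum_congr rfl (fun j _ => hptd j)
      omega
    have hs' : ∑ j ∈ interT M k m y', x j ≤ m*k+1 := by
      calc ∑ j ∈ interT M k m y', x j ≤ ∑ j, x j :=
            Finset.sum_le_sum_of_subset (Finset.subset_univ _)
        _ = m*k+1 := hx.2.1
    have hmul : dS x y' * (m*k+2) + 2*(m*k+2) = dS x y * (m*k+2) := by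
      rw [← hdd]; ring
    have hnext : dS x y' * (m*k+2) + (∑ j ∈ interT M k m y', x j) ≤ μ - 1 := by
      have hs0 : 0 ≤ ∑ j ∈ interT M k m y, x j := Nat.zero_le _
      omega
    have hμ1 : μ - 1 < μ := by omega
    exact Relation.ReflTransGen.tail (IH (μ-1) hμ1 x y' hx hy' hnext)
      ⟨hg2, hg1, locally_symm M k m hloc⟩
  · -- C3
    push_neg at hC1 hC2
    set Ax := interT M k m x with hAxdef
    set Ay := interT M k m y with hAydef
    have htAx : tightS M k m x Ax := interT_tight M k m T hkr hx
    have htAy : tightS M k m y Ay := interT_tight M k m T hkr hy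
    -- x = y on Ax, Ax is y-tight
    have h1 : ∑ j ∈ Ax, x j ≤ ∑ j ∈ Ax, y j :=
      Finset.sum_le_sum (fun j hj => hC1 j hj)
    have h2 : ∑ j ∈ Ax, y j ≤ m * min (M.r Ax) k + 1 := ok_bound M k m T hy Ax
    rw [tightS] at htAx htAy
    have heqAx : ∑ j ∈ Ax, y j = ∑ j ∈ Ax, x j := by omega
    have hptAx : ∀ j ∈ Ax, x j = y j := by
      intro j hj
      by_contra hne2
      have := Finset.sum_lt_sum (fun i hi => hC1 i hi)
        ⟨j, hj, lt_of_le_of_ne (hC1 j hj) hne2⟩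
      omega
    have htAxy : tightS M k m y Ax := by rw [tightS]; omega
    have hAyAx : Ay ⊆ Ax := interT_subset M k m htAxy
    -- symmetric
    have h1' : ∑ j ∈ Ay, y j ≤ ∑ j ∈ Ay, x j :=
      Finset.sum_le_sum (fun j hj => hC2 j hj)
    have h2' : ∑ j ∈ Ay, x j ≤ m * min (M.r Ay) k + 1 := ok_bound M k m T hx Ay
    have heqAy : ∑ j ∈ Ay, x j = ∑ j ∈ Ay, y j := by omega
    have hptAy : ∀ j ∈ Ay, y j = x j := by
      intro j hj
      by_contra hne2
      have := Finset.sum_lt_sum (fun i hi => hC2 i hi)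
        ⟨j, hj, lt_of_le_of_ne (hC2 j hj) hne2⟩
      omega
    have htAyx : tightS M k m x Ay := by rw [tightS]; omega
    have hAxAy : Ax ⊆ Ay := interT_subset M k m htAyx
    have hAeq : Ax = Ay := Finset.Subset.antisymm hAxAy hAyAx
    -- choose c ∈ Ax with x c ≥ 1
    have hcex : ∃ c ∈ Ax, 0 < x c := by
      by_contra hcon
      push_neg at hcon
      have : ∑ j ∈ Ax, x j = 0 := Finset.sum_eq_zero (fun j hj => by
        have := hcon j hj; omega)
      omega
    obtain ⟨c, hcAx, hcpos⟩ := hcex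
    have hxcyc : x c = y c := hptAx c hcAx
    have hbAy : b ∉ Ay := fun h => by have := hptAy b h; omega
    have hbT : x b + 1 ≤ T b := le_trans (by omega) (hy.1 b)
    obtain ⟨x', hx', hptw, hg1, hg2, hloc⟩ := step_rel M k m T hx hcAx hbT
    have hcb : c ≠ b := by
      intro h
      subst h
      omega
    have hptd : ∀ j, (x' j - y j) + (y j - x' j) + (if j = b then 1 else 0)
        = (x j - y j) + (y j - x j) + (if j = c then 1 else 0) := by
      intro j
      have h1j := hptw j
      by_cases hjc : j = c
      · have hjb : ¬ j = b := fun h => hcb (hjc.symm.trans h)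
        have hyj : x j = y j := by rw [hjc]; exact hxcyc
        have hyj2 : 0 < x j := by rw [hjc]; exact hcpos
        rw [if_pos hjc, if_neg hjb] at h1j ⊢
        omega
      · by_cases hjb : j = b
        · have hyj : x j < y j := by rw [hjb]; exact hb
          rw [if_neg hjc, if_pos hjb] at h1j ⊢
          omega
        · rw [if_neg hjc, if_neg hjb] at h1j ⊢
          omega
    have e1 : ∑ j, (if j = c then (1:ℕ) else 0) = 1 := by
      rw [Finset.sum_ite_eq' Finset.univ c (fun _ => (1:ℕ))]; simp
    have e2 : ∑ j, (if j = b then (1:ℕ) else 0) = 1 := by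
      rw [Finset.sum_ite_eq' Finset.univ b (fun _ => (1:ℕ))]; simp
    have hdd : dS x' y = dS x y := by
      unfold dS
      have hL : ∑ j, ((x' j - y j) + (y j - x' j)) + ∑ j, (if j = b then (1:ℕ) else 0)
          = ∑ j, ((x j - y j) + (y j - x j)) + ∑ j, (if j = c then (1:ℕ) else 0) := by
        rw [← Finset.sum_add_distrib, ← Finset.sum_add_distrib]
        exact Finset.sum_congr rfl (fun j _ => hptd j)
      omega
    -- second term decreases by 1
    have hsecond : (∑ j ∈ Ay, x' j) + 1 = ∑ j ∈ Ay, x j := by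
      have hL : ∑ j ∈ Ay, x' j + ∑ j ∈ Ay, (if j = c then (1:ℕ) else 0)
          = ∑ j ∈ Ay, x j + ∑ j ∈ Ay, (if j = b then (1:ℕ) else 0) := by
        rw [← Finset.sum_add_distrib, ← Finset.sum_add_distrib]
        exact Finset.sum_congr rfl (fun j _ => hptw j)
      have e1' : ∑ j ∈ Ay, (if j = c then (1:ℕ) else 0) = 1 := by
        rw [Finset.sum_ite_eq' Ay c (fun _ => (1:ℕ))]
        rw [if_pos (hAeq ▸ hcAx)]
      have e2' : ∑ j ∈ Ay, (if j = b then (1:ℕ) else 0) = 0 := by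
        rw [Finset.sum_ite_eq' Ay b (fun _ => (1:ℕ))]
        rw [if_neg hbAy]
      rw [e1', e2'] at hL
      omega
    have hpos2 : 0 < ∑ j ∈ Ay, x j := by
      rw [← hAeq]
      omega
    have hnext : dS x' y * (m*k+2) + (∑ j ∈ interT M k m y, x' j) ≤ μ - 1 := by
      rw [hdd, ← hAydef]
      omega
    have hμ1 : μ - 1 < μ := by omega
    exact Relation.ReflTransGen.head ⟨hg1, hg2, hloc⟩ (IH (μ-1) hμ1 x' y hx' hy hnext)

end Main2
/-- Any two good decompositions of an `N`-system `T` (`N ≥ mk+1`) are equivalent,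
i.e. connected by a finite chain of locally related good decompositions. -/
theorem good_decompositions_equivalent {n k m N : ℕ} (hn : 0 < n) (hk : 0 < k)
    (hm : 1 ≤ m) (hnk : k ≤ n) (hN : m * k + 1 ≤ N)
    (M : PaperMatroid (Fin n))
    (T : Fin n → ℕ) (hT : ∑ j, T j = N)
    (p q : (Fin n → ℕ) × (Fin n → ℕ))
    (hp : GoodDecomp M k m T p) (hq : GoodDecomp M k m T q) :
    Relation.ReflTransGen
      (fun a b => GoodDecomp M k m T a ∧ GoodDecomp M k m T b ∧
        LocallyRelated M k m a b) p q := by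
  classical
  obtain ⟨hpT, hpS⟩ := hp
  obtain ⟨hqT, hqS⟩ := hq
  obtain ⟨hpsum, Bvp, ap, hBp, hreprp⟩ := strong_repr hpS
  obtain ⟨hqsum, Bvq, aq, hBq, hreprq⟩ := strong_repr hqS
  have hple : ∀ j, p.2 j ≤ T j := by
    intro j
    have := congrFun hpT j
    rw [Pi.add_apply] at this
    omega
  have hqle : ∀ j, q.2 j ≤ T j := by
    intro j
    have := congrFun hqT j
    rw [Pi.add_apply] at this
    omega
  have hOkp : OkSys M k m T p.2 := ⟨hple, hpsum, Bvp, ap, hBp, hreprp⟩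
  have hOkq : OkSys M k m T q.2 := ⟨hqle, hqsum, Bvq, aq, hBq, hreprq⟩
  have hkr : k ≤ M.r Finset.univ := by
    have i0 : Fin m := ⟨0, hm⟩
    have h1 := M.card_le_r (Finset.subset_univ (Bvp i0)) (hBp i0).1
    rw [(hBp i0).2] at h1
    exact h1
  have hpp : p = pairOf T p.2 := by
    refine Prod.ext ?_ rfl
    funext j
    have := congrFun hpT j
    rw [Pi.add_apply] at this
    show p.1 j = T j - p.2 j
    omega
  have hqq : q = pairOf T q.2 := by
    refine Prod.ext ?_ rfl
    funext j
    have := congrFun hqT j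
    rw [Pi.add_apply] at this
    show q.1 j = T j - q.2 j
    omega
  rw [hpp, hqq]
  exact connect M k m T hkr
    (dS p.2 q.2 * (m*k+2) + (∑ j ∈ interT M k m q.2, p.2 j))
    p.2 q.2 hOkp hOkq le_rfl
end

section
/- Let M ⊆ ℂⁿ be a convex open set, and let A : (i,j,k) ↦ A_{ijk} ∈ 𝒪(M) be a family of holomorphic functions symmetric in (i,j,k) such that ∂_i A_{jkl} is symmetric in all four indices i,j,k,l. Then there exists a holomorphic function F on M with ∂_i ∂_j ∂_k F = A_{ijk} for all i,j,k. -/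
/-!
A holomorphic 1-form `∑ G_i dz_i` on a convex open set whose coefficients satisfy
`∂_i G_j = ∂_j G_i` is exact (Poincaré lemma). Integrating `A` three times in this way gives
`B_{jk}`, `C_k` and finally `F`. The only care needed is at the first step: the primitives of
`A_{·jk}` and `A_{·kj}` may differ by a constant, and unless `B` is symmetric (we integrate only
for `j ≤ k`) the last integration, which needs `∂_j C_k = B_{jk}` symmetric, fails.
-/

/-- The partial derivative `∂_i f` of `f : ℂⁿ → ℂ`. -/
noncomputable def pd {n : ℕ} (i : Fin n) (f : (Fin n → ℂ) → ℂ) : (Fin n → ℂ) → ℂ :=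
  fun z => fderiv ℂ f z (Pi.single i 1)

open Set

theorem Convex.exists_forall_hasFDerivAt_of_differentiableOn_of_fderiv_symmetric
    {𝕜 E F : Type*} [RCLike 𝕜] [NormedAddCommGroup E] [NormedSpace 𝕜 E] [NormedSpace ℝ E]
    [IsScalarTower ℝ 𝕜 E] [NormedAddCommGroup F] [NormedSpace 𝕜 F] [NormedSpace ℝ F]
    [CompleteSpace F] {s : Set E} {ω : E → E →L[𝕜] F} (hs : Convex ℝ s) (hso : IsOpen s)
    (hω : DifferentiableOn 𝕜 ω s) (hdω : ∀ a ∈ s, ∀ x y, fderiv 𝕜 ω a x y = fderiv 𝕜 ω a y x) :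
    ∃ f, ∀ a ∈ s, HasFDerivAt f (ω a) a := by
  have hω' : ∀ a ∈ s, HasFDerivAt ω (fderiv 𝕜 ω a) a := fun a ha =>
    (hω.differentiableAt (hso.mem_nhds ha)).hasFDerivAt
  obtain ⟨f, hf⟩ := hs.exists_forall_hasFDerivWithinAt_of_hasFDerivWithinAt_symmetric
    (dω := fun a => (fderiv 𝕜 ω a).restrictScalars ℝ)
    (fun a ha => ((hω' a ha).restrictScalars ℝ).hasFDerivWithinAt)
    (fun a ha x _ y _ => hdω a ha x y)
  exact ⟨f, fun a ha => (hf a ha).hasFDerivAt (hso.mem_nhds ha)⟩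

theorem ContinuousLinearMap.flip_eq_self_of_single {𝕜 ι F : Type*} [NontriviallyNormedField 𝕜]
    [Fintype ι] [DecidableEq ι] [NormedAddCommGroup F] [NormedSpace 𝕜 F]
    {B : (ι → 𝕜) →L[𝕜] (ι → 𝕜) →L[𝕜] F}
    (h : ∀ i j, B (Pi.single i 1) (Pi.single j 1) = B (Pi.single j 1) (Pi.single i 1)) :
    B.flip = B :=
  toLinearMap₁₂_injective <| LinearMap.ext_basis (Pi.basisFun 𝕜 ι) (Pi.basisFun 𝕜 ι)
    fun i j => by simpa using h j i

theorem pd_eq_of_eqOn {n : ℕ} {M : Set (Fin n → ℂ)} {f g : (Fin n → ℂ) → ℂ} (hM : IsOpen M)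
    (h : EqOn f g M) (i : Fin n) {z : Fin n → ℂ} (hz : z ∈ M) : pd i f z = pd i g z := by
  rw [pd, pd, (Filter.eventuallyEq_of_mem (hM.mem_nhds hz) h).fderiv_eq]

theorem exists_pd_eq_of_pd_symmetric {n : ℕ} {M : Set (Fin n → ℂ)} (hM : IsOpen M)
    (hconv : Convex ℝ M) {G : Fin n → (Fin n → ℂ) → ℂ} (hG : ∀ i, DifferentiableOn ℂ (G i) M)
    (hsym : ∀ i j, ∀ z ∈ M, pd i (G j) z = pd j (G i) z) :
    ∃ f, DifferentiableOn ℂ f M ∧ ∀ i, ∀ z ∈ M, pd i f z = G i z := by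
  set ω : (Fin n → ℂ) → (Fin n → ℂ) →L[ℂ] ℂ := fun z => ∑ k, G k z • .proj k
  have hω : ∀ z ∈ M, HasFDerivAt ω (∑ k, (fderiv ℂ (G k) z).smulRight (.proj k)) z := fun z hz =>
    .fun_sum fun k _ => ((hG k).differentiableAt (hM.mem_nhds hz)).hasFDerivAt.smul_const
      (ContinuousLinearMap.proj k : (Fin n → ℂ) →L[ℂ] ℂ)
  have hdω : ∀ z ∈ M, ∀ x y, fderiv ℂ ω z x y = fderiv ℂ ω z y x := by
    intro z hz x y
    rw [← ContinuousLinearMap.flip_apply (fderiv ℂ ω z),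
      ContinuousLinearMap.flip_eq_self_of_single]
    intro i j
    simpa [(hω z hz).fderiv, Pi.single_apply, pd] using hsym i j z hz
  obtain ⟨f, hf⟩ := hconv.exists_forall_hasFDerivAt_of_differentiableOn_of_fderiv_symmetric hM
    (fun z hz => (hω z hz).differentiableAt.differentiableWithinAt) hdω
  refine ⟨f, fun z hz => (hf z hz).differentiableAt.differentiableWithinAt, fun i z hz => ?_⟩
  simp [pd, (hf z hz).fderiv, ω, Pi.single_apply]

theorem exists_symmetric_pd_eq {n : ℕ} {M : Set (Fin n → ℂ)} (hM : IsOpen M)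
    (hconv : Convex ℝ M) {A : Fin n → Fin n → Fin n → (Fin n → ℂ) → ℂ}
    (hdiff : ∀ i j k, DifferentiableOn ℂ (A i j k) M) (hsym : ∀ i j k, A i j k = A i k j)
    (hdsym : ∀ i j k l, ∀ z ∈ M, pd i (A j k l) z = pd j (A i k l) z) :
    ∃ S : Fin n → Fin n → (Fin n → ℂ) → ℂ, (∀ j k, DifferentiableOn ℂ (S j k) M) ∧
      (∀ j k, S j k = S k j) ∧ ∀ i j k, ∀ z ∈ M, pd i (S j k) z = A i j k z := by
  choose B hBdiff hB using fun j k => exists_pd_eq_of_pd_symmetric hM hconv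
    (G := fun i => A i j k) (fun i => hdiff i j k) fun i i' => hdsym i i' j k
  refine ⟨fun j k => B (min j k) (max j k), fun j k => hBdiff _ _,
    fun j k => by simp only [min_comm, max_comm], fun i j k z hz => ?_⟩
  rw [hB _ _ i z hz]
  rcases le_total j k with h | h
  · rw [min_eq_left h, max_eq_right h]
  · rw [min_eq_right h, max_eq_left h, hsym]

/-- Let `M ⊆ ℂⁿ` be convex open and `A_{ijk}` holomorphic functions on `M`,
symmetric in `(i,j,k)`, such that `∂_i A_{jkl}` is symmetric in all four indices.
Then there is a holomorphic `F` on `M` with `∂_i ∂_j ∂_k F = A_{ijk}`. -/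
theorem exists_potential_of_symmetric {n : ℕ} (M : Set (Fin n → ℂ))
    (hopen : IsOpen M) (hconv : Convex ℝ M)
    (A : Fin n → Fin n → Fin n → (Fin n → ℂ) → ℂ)
    (hdiff : ∀ i j k, DifferentiableOn ℂ (A i j k) M)
    (hsym1 : ∀ i j k, A i j k = A j i k)
    (hsym2 : ∀ i j k, A i j k = A i k j)
    (hdsym : ∀ i j k l, ∀ z ∈ M, pd i (A j k l) z = pd j (A i k l) z) :
    ∃ F : (Fin n → ℂ) → ℂ, DifferentiableOn ℂ F M ∧
      ∀ i j k, ∀ z ∈ M, pd i (pd j (pd k F)) z = A i j k z := by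
  obtain ⟨S, hSdiff, hSsymm, hS⟩ := exists_symmetric_pd_eq hopen hconv hdiff hsym2 hdsym
  choose C hCdiff hC using fun k => exists_pd_eq_of_pd_symmetric hopen hconv
    (G := fun j => S j k) (fun j => hSdiff j k) fun i j z hz => by
      rw [hS _ _ _ _ hz, hS _ _ _ _ hz, hsym1]
  obtain ⟨F, hFdiff, hF⟩ := exists_pd_eq_of_pd_symmetric hopen hconv hCdiff
    fun j k z hz => by rw [hC _ _ _ hz, hC _ _ _ hz, hSsymm]
  have hFS : ∀ j k, EqOn (pd j (pd k F)) (S j k) M := fun j k x hx =>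
    (pd_eq_of_eqOn hopen (hF k) j hx).trans (hC k j x hx)
  exact ⟨F, hFdiff, fun i j k z hz => (pd_eq_of_eqOn hopen (hFS j k) i hz).trans (hS i j k z hz)⟩
end

section
/- Let T be an N-system (N ≥ mk+1) over a rank-k matroid (J,F), and let (T₁,T₂) and (S₁,S₂) be two locally related but unequal good decompositions of T, with strong decompositions T₂ = T₂^{(1)}+...+T₂^{(m)}+[a] and S₂ = T₂^{(1)}+...+T₂^{(m)}+[b], a ≠ b. Then T₁ - [b] = S₁ - [a] and this is a map J → ℤ_{≥0}. -/
/-- If `(T₁,T₂)` and `(S₁,S₂)` are locally related but unequal good decompositions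
of `T`, with strong decompositions `T₂ = T₂⁽¹⁾+...+T₂⁽ᵐ⁾+[a]` and
`S₂ = T₂⁽¹⁾+...+T₂⁽ᵐ⁾+[b]`, `a ≠ b`, then `T₁ - [b] = S₁ - [a]` and this
difference has nonnegative values (is a map `J → ℤ_{≥0}`). -/
theorem locally_related_difference {n k m N : ℕ} (hn : 0 < n) (hk : 0 < k)
    (hm : 1 ≤ m) (hnk : k ≤ n) (hN : m * k + 1 ≤ N)
    (M : PaperMatroid (Fin n))
    (T : Fin n → ℕ) (hT : ∑ j, T j = N)
    (T₁ T₂ S₁ S₂ : Fin n → ℕ)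
    (hgoodT : GoodDecomp M k m T (T₁, T₂)) (hgoodS : GoodDecomp M k m T (S₁, S₂))
    (B : Fin m → (Fin n → ℕ)) (hB : ∀ i, IsBaseSys M k (B i))
    (a b : Fin n) (hab : a ≠ b)
    (hdecT : T₂ = (∑ i, B i) + indSys a)
    (hdecS : S₂ = (∑ i, B i) + indSys b) :
    (∀ i : Fin n, (T₁ i : ℤ) - indSys b i = (S₁ i : ℤ) - indSys a i) ∧
    (∀ i : Fin n, indSys b i ≤ T₁ i) ∧ (∀ i : Fin n, indSys a i ≤ S₁ i) := by
  have h : T₁ + ((∑ i, B i) + indSys a) = S₁ + ((∑ i, B i) + indSys b) := by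
    rw [← hdecT, ← hdecS, ← hgoodT.1, ← hgoodS.1]
  have key : ∀ i, T₁ i + indSys a i = S₁ i + indSys b i := by
    intro i
    have := congrFun h i
    simp only [Pi.add_apply] at this
    omega
  have ha : ∀ i, indSys a i = if i = a then 1 else 0 := fun i => rfl
  have hb : ∀ i, indSys b i = if i = b then 1 else 0 := fun i => rfl
  have hTb : 1 ≤ T₁ b := by
    have := key b
    rw [ha b, hb b] at this
    simp [Ne.symm hab] at this
    omega
  have hSa : 1 ≤ S₁ a := by
    have := key a
    rw [ha a, hb a] at this
    simp [hab] at this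
    omega
  refine ⟨?_, ?_, ?_⟩ <;> intro i
  · have := key i
    rw [ha i, hb i] at this ⊢
    push_cast
    split_ifs at this ⊢ <;> omega
  · rw [hb i]; split_ifs with h
    · subst h; omega
    · omega
  · rw [ha i]; split_ifs with h
    · subst h; omega
    · omega
end
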